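/- Let D = (E, 𝓕) be a set system with 𝓕 nonempty, let A ⊆ E, and let X be a separator of D. Then X is a separator of the twist D*A and X is a separator of the loop complementation D+A. -/

import Mathlib

noncomputable section
open scoped Classical symmDiff

/-- A set system: a finite ground set `E` together with a collection `Fs` of subsets of
`E`, the feasible sets. -/
structure SetSystem (α : Type*) where
  E : Finset α
  Fs : Set (Finset α)

namespace SetSystem

variable {α : Type*} [DecidableEq α]

/-- A delta-matroid: a set system whose nonempty collection of feasible sets (subsets of
the ground set) satisfies the symmetric exchange axiom. -/
def IsDeltaMatroid (D : SetSystem α) : Prop :=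
  D.Fs.Nonempty ∧ (∀ F ∈ D.Fs, F ⊆ D.E) ∧
    ∀ F₁ ∈ D.Fs, ∀ F₂ ∈ D.Fs, ∀ x ∈ F₁ ∆ F₂, ∃ y ∈ F₁ ∆ F₂, F₁ ∆ ({x, y} : Finset α) ∈ D.Fs

/-- A delta-matroid is even if all its feasible sets have the same parity of size. -/
def IsEven (D : SetSystem α) : Prop :=
  ∀ F₁ ∈ D.Fs, ∀ F₂ ∈ D.Fs, F₁.card % 2 = F₂.card % 2

/-- `e` is a coloop: it belongs to every feasible set. -/
def IsColoop (D : SetSystem α) (e : α) : Prop := ∀ F ∈ D.Fs, e ∈ F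

/-- `e` is a loop: it belongs to no feasible set. -/
def IsLoop (D : SetSystem α) (e : α) : Prop := ∀ F ∈ D.Fs, e ∉ F

/-- The underlying deletion operation: keep the feasible sets avoiding `e`. -/
def del₀ (D : SetSystem α) (e : α) : SetSystem α :=
  ⟨D.E.erase e, {F | F ∈ D.Fs ∧ e ∉ F}⟩

/-- The underlying contraction operation: remove `e` from the feasible sets containing it. -/
def con₀ (D : SetSystem α) (e : α) : SetSystem α :=
  ⟨D.E.erase e, {F | ∃ G ∈ D.Fs, e ∈ G ∧ F = G.erase e}⟩

/-- Deletion `D∖e`: `del₀` if `e` is not a coloop, and `con₀` (= `D/e`) if `e` is a coloop. -/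
def delete (D : SetSystem α) (e : α) : SetSystem α :=
  if D.IsColoop e then D.con₀ e else D.del₀ e

/-- Contraction `D/e`: `con₀` if `e` is not a loop, and `del₀` (= `D∖e`) if `e` is a loop. -/
def contract (D : SetSystem α) (e : α) : SetSystem α :=
  if D.IsLoop e then D.del₀ e else D.con₀ e

/-- The twist `D*A`: replace each feasible set `F` by `F ∆ A`. -/
def twist (D : SetSystem α) (A : Finset α) : SetSystem α :=
  ⟨D.E, {F | ∃ G ∈ D.Fs, F = G ∆ A}⟩

/-- Loop complementation `D+e`. -/
def lcomp (D : SetSystem α) (e : α) : SetSystem α :=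
  ⟨D.E, D.Fs ∆ {F | ∃ G ∈ D.Fs, e ∉ G ∧ F = G ∪ {e}}⟩

/-- Loop complementation `D+A` by a set `A = {a₁, …, aₙ}`, defined as the iterated
single-element loop complementation `D+a₁+⋯+aₙ` (the result is order-independent). -/
def lcompSet (D : SetSystem α) (A : Finset α) : SetSystem α :=
  A.toList.foldl lcomp D

/-- The operation `D ∗̄ A = D+A*A+A`. -/
def starBar (D : SetSystem α) (A : Finset α) : SetSystem α :=
  ((D.lcompSet A).twist A).lcompSet A

/-- The direct sum of two set systems. -/
def directSum (D₁ D₂ : SetSystem α) : SetSystem α :=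
  ⟨D₁.E ∪ D₂.E, {F | ∃ F₁ ∈ D₁.Fs, ∃ F₂ ∈ D₂.Fs, F = F₁ ∪ F₂}⟩

/-- `X` is a separator of `D`: `D = D₁ ⊕ D₂` for set systems `D₁`, `D₂` with ground sets
`X` and `E − X`. -/
def IsSeparator (D : SetSystem α) (X : Finset α) : Prop :=
  X ⊆ D.E ∧ ∃ D₁ D₂ : SetSystem α, D₁.E = X ∧ D₂.E = D.E \ X ∧
    (∀ F ∈ D₁.Fs, F ⊆ D₁.E) ∧ (∀ F ∈ D₂.Fs, F ⊆ D₂.E) ∧ D = D₁.directSum D₂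

/-- `D` is connected: it has no proper separator. -/
def Connected (D : SetSystem α) : Prop :=
  ¬ ∃ X, D.IsSeparator X ∧ X.Nonempty ∧ X ≠ D.E

/-- `D'` is a minor of `D`: it is obtained from `D` by a sequence of single-element
deletions and contractions. -/
inductive MinorOf : SetSystem α → SetSystem α → Prop
  | refl (D : SetSystem α) : MinorOf D D
  | del {D' D : SetSystem α} (e : α) : MinorOf D' D → e ∈ D'.E → MinorOf (D'.delete e) D
  | con {D' D : SetSystem α} (e : α) : MinorOf D' D → e ∈ D'.E → MinorOf (D'.contract e) D

/-- `D'` is a 3-minor of `D`: it is obtained from `D` by a sequence of single-element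
deletions, contractions and twist-contractions `D ↦ (D+e)/e`. -/
inductive Minor3Of : SetSystem α → SetSystem α → Prop
  | refl (D : SetSystem α) : Minor3Of D D
  | del {D' D : SetSystem α} (e : α) : Minor3Of D' D → e ∈ D'.E → Minor3Of (D'.delete e) D
  | con {D' D : SetSystem α} (e : α) : Minor3Of D' D → e ∈ D'.E → Minor3Of (D'.contract e) D
  | tcon {D' D : SetSystem α} (e : α) : Minor3Of D' D → e ∈ D'.E →
      Minor3Of ((D'.lcomp e).contract e) D

/-- `D` is vf-safe: every set system obtained from `D` by a sequence of twists by single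
elements and loop complementations is a delta-matroid. -/
inductive TwistLcompReach : SetSystem α → SetSystem α → Prop
  | refl (D : SetSystem α) : TwistLcompReach D D
  | twist {D' D : SetSystem α} (e : α) : TwistLcompReach D' D → e ∈ D'.E →
      TwistLcompReach (D'.twist {e}) D
  | lcomp {D' D : SetSystem α} (e : α) : TwistLcompReach D' D → e ∈ D'.E →
      TwistLcompReach (D'.lcomp e) D

/-- A vf-safe delta-matroid. -/
def IsVfSafe (D : SetSystem α) : Prop :=
  ∀ D' : SetSystem α, TwistLcompReach D' D → D'.IsDeltaMatroid

end SetSystem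

/-!
A separator `X` splits every feasible set `H` into its parts `H ∩ X` and `H \ X`, which range
independently over the feasible sets of the two summands. A twist by `A` acts on the two parts
as twists by `A ∩ X` and `A \ X`, and a loop complementation by `e` only inspects the part
containing `e`, so both operations act summand by summand.
-/

namespace SetSystem

theorem ext {α : Type*} {D D' : SetSystem α} (hE : D.E = D'.E) (hFs : D.Fs = D'.Fs) :
    D = D' := by
  cases D; cases D'; congr

variable {α : Type*} [DecidableEq α]

theorem mem_twist_Fs {D : SetSystem α} {A H : Finset α} :
    H ∈ (D.twist A).Fs ↔ H ∆ A ∈ D.Fs := by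
  constructor
  · rintro ⟨G, hG, rfl⟩
    rwa [symmDiff_symmDiff_cancel_right]
  · exact fun h => ⟨H ∆ A, h, (symmDiff_symmDiff_cancel_right A H).symm⟩

theorem mem_lcomp_Fs {D : SetSystem α} {e : α} {H : Finset α} :
    H ∈ (D.lcomp e).Fs ↔ Xor (H ∈ D.Fs) (e ∈ H ∧ H.erase e ∈ D.Fs) := by
  have h_added : (∃ G ∈ D.Fs, e ∉ G ∧ H = G ∪ {e}) ↔ e ∈ H ∧ H.erase e ∈ D.Fs := by
    constructor
    · rintro ⟨G, hG, heG, rfl⟩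
      simpa [Finset.erase_eq_of_notMem heG] using hG
    · rintro ⟨heH, hH⟩
      exact ⟨H.erase e, hH, Finset.notMem_erase e H, by simp [heH]⟩
  exact Set.mem_symmDiff.trans (by rw [Set.mem_ofPred_eq, h_added, xor_def])

theorem subset_of_mem_twist {D : SetSystem α} {A S F : Finset α}
    (hD : ∀ G ∈ D.Fs, G ⊆ S) (hA : A ⊆ S) (hF : F ∈ (D.twist A).Fs) : F ⊆ S := by
  obtain ⟨G, hG, rfl⟩ := hF
  exact Finset.symmDiff_subset_union.trans (Finset.union_subset (hD G hG) hA)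

theorem subset_of_mem_lcomp {D : SetSystem α} {e : α} {S F : Finset α}
    (hD : ∀ G ∈ D.Fs, G ⊆ S) (he : e ∈ S) (hF : F ∈ (D.lcomp e).Fs) : F ⊆ S := by
  rcases xor_def.mp (mem_lcomp_Fs.mp hF) with ⟨hF, -⟩ | ⟨⟨heF, hF⟩, -⟩
  · exact hD F hF
  · rw [← Finset.insert_erase heF]
    exact Finset.insert_subset he (hD _ hF)

theorem disjoint_of_mem_lcomp {D : SetSystem α} {e : α} {S F : Finset α}
    (hD : ∀ G ∈ D.Fs, Disjoint G S) (he : e ∉ S) (hF : F ∈ (D.lcomp e).Fs) : Disjoint F S := by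
  rcases xor_def.mp (mem_lcomp_Fs.mp hF) with ⟨hF, -⟩ | ⟨⟨heF, hF⟩, -⟩
  · exact hD F hF
  · rw [← Finset.insert_erase heF]
    exact Finset.disjoint_insert_left.mpr ⟨he, hD _ hF⟩

section directSum

variable {D₁ D₂ : SetSystem α} {X : Finset α}

theorem mem_directSum_Fs (h₁ : ∀ F ∈ D₁.Fs, F ⊆ X) (h₂ : ∀ F ∈ D₂.Fs, Disjoint F X)
    {H : Finset α} : H ∈ (D₁.directSum D₂).Fs ↔ H ∩ X ∈ D₁.Fs ∧ H \ X ∈ D₂.Fs := by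
  constructor
  · rintro ⟨F₁, hF₁, F₂, hF₂, rfl⟩
    rw [Finset.union_inter_distrib_right, Finset.inter_eq_left.mpr (h₁ F₁ hF₁),
      Finset.disjoint_iff_inter_eq_empty.mp (h₂ F₂ hF₂), Finset.union_empty,
      Finset.union_sdiff_distrib, Finset.sdiff_eq_empty_iff_subset.mpr (h₁ F₁ hF₁),
      Finset.empty_union, (h₂ F₂ hF₂).sdiff_eq_left]
    exact ⟨hF₁, hF₂⟩
  · rintro ⟨hH₁, hH₂⟩
    exact ⟨_, hH₁, _, hH₂, by rw [Finset.union_comm, Finset.sdiff_union_inter]⟩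

theorem twist_directSum (h₁ : ∀ F ∈ D₁.Fs, F ⊆ X) (h₂ : ∀ F ∈ D₂.Fs, Disjoint F X)
    (A : Finset α) :
    (D₁.directSum D₂).twist A = (D₁.twist (A ∩ X)).directSum (D₂.twist (A \ X)) := by
  have h₁' (F) (hF : F ∈ (D₁.twist (A ∩ X)).Fs) : F ⊆ X :=
    subset_of_mem_twist h₁ Finset.inter_subset_right hF
  have h₂' (F) (hF : F ∈ (D₂.twist (A \ X)).Fs) : Disjoint F X := by
    obtain ⟨G, hG, rfl⟩ := hF
    exact (h₂ G hG).symmDiff_left Finset.sdiff_disjoint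
  have h_inter : ∀ H : Finset α, H ∆ A ∩ X = (H ∩ X) ∆ (A ∩ X) :=
    fun H => inf_symmDiff_distrib_right H A X
  have h_sdiff : ∀ H : Finset α, H ∆ A \ X = (H \ X) ∆ (A \ X) := by
    intro H; ext x; simp only [Finset.mem_sdiff, Finset.mem_symmDiff]; tauto
  refine ext rfl (Set.ext fun H => ?_)
  rw [mem_twist_Fs, mem_directSum_Fs h₁ h₂, mem_directSum_Fs h₁' h₂', mem_twist_Fs,
    mem_twist_Fs, h_inter, h_sdiff]

theorem lcomp_directSum_of_mem (h₁ : ∀ F ∈ D₁.Fs, F ⊆ X) (h₂ : ∀ F ∈ D₂.Fs, Disjoint F X)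
    {e : α} (he : e ∈ X) : (D₁.directSum D₂).lcomp e = (D₁.lcomp e).directSum D₂ := by
  have h_sdiff (H : Finset α) : H.erase e \ X = H \ X := by
    rw [Finset.erase_sdiff_comm, Finset.erase_eq_of_notMem fun h => (Finset.mem_sdiff.mp h).2 he]
  refine ext rfl (Set.ext fun H => ?_)
  have h_mem : e ∈ H ↔ e ∈ H ∩ X := by simp [he]
  rw [mem_lcomp_Fs, mem_directSum_Fs h₁ h₂, mem_directSum_Fs h₁ h₂,
    mem_directSum_Fs (fun F => subset_of_mem_lcomp h₁ he) h₂, mem_lcomp_Fs,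
    Finset.erase_inter, h_sdiff, h_mem, xor_def, xor_def]
  tauto

theorem lcomp_directSum_of_notMem (h₁ : ∀ F ∈ D₁.Fs, F ⊆ X) (h₂ : ∀ F ∈ D₂.Fs, Disjoint F X)
    {e : α} (he : e ∉ X) : (D₁.directSum D₂).lcomp e = D₁.directSum (D₂.lcomp e) := by
  have h_inter (H : Finset α) : H.erase e ∩ X = H ∩ X := by
    rw [Finset.erase_inter, Finset.erase_eq_of_notMem fun h => he (Finset.mem_inter.mp h).2]
  refine ext rfl (Set.ext fun H => ?_)
  have h_mem : e ∈ H ↔ e ∈ H \ X := by simp [he]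
  rw [mem_lcomp_Fs, mem_directSum_Fs h₁ h₂, mem_directSum_Fs h₁ h₂,
    mem_directSum_Fs h₁ (fun F => disjoint_of_mem_lcomp h₂ he), mem_lcomp_Fs, h_inter,
    Finset.erase_sdiff_comm, h_mem, xor_def, xor_def]
  tauto

end directSum

section IsSeparator

variable {D : SetSystem α} {X : Finset α}

theorem IsSeparator.twist (hX : D.IsSeparator X) {A : Finset α} (hA : A ⊆ D.E) :
    (D.twist A).IsSeparator X := by
  obtain ⟨hXE, D₁, D₂, rfl, hE₂, h₁, h₂, rfl⟩ := hX
  have h₂X (F) (hF : F ∈ D₂.Fs) : Disjoint F D₁.E :=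
    (Finset.subset_sdiff.mp (hE₂ ▸ h₂ F hF)).2
  refine ⟨hXE, D₁.twist (A ∩ D₁.E), D₂.twist (A \ D₁.E), rfl, hE₂,
    fun F => subset_of_mem_twist h₁ Finset.inter_subset_right,
    fun F => subset_of_mem_twist h₂ (hE₂ ▸ Finset.sdiff_subset_sdiff hA le_rfl),
    twist_directSum h₁ h₂X A⟩

theorem IsSeparator.lcomp (hX : D.IsSeparator X) {e : α} (he : e ∈ D.E) :
    (D.lcomp e).IsSeparator X := by
  obtain ⟨hXE, D₁, D₂, rfl, hE₂, h₁, h₂, rfl⟩ := hX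
  have h₂X (F) (hF : F ∈ D₂.Fs) : Disjoint F D₁.E :=
    (Finset.subset_sdiff.mp (hE₂ ▸ h₂ F hF)).2
  by_cases heX : e ∈ D₁.E
  · exact ⟨hXE, D₁.lcomp e, D₂, rfl, hE₂, fun F => subset_of_mem_lcomp h₁ heX, h₂,
      lcomp_directSum_of_mem h₁ h₂X heX⟩
  · have heE₂ : e ∈ D₂.E := hE₂ ▸ Finset.mem_sdiff.mpr ⟨he, heX⟩
    exact ⟨hXE, D₁, D₂.lcomp e, rfl, hE₂, h₁, fun F => subset_of_mem_lcomp h₂ heE₂,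
      lcomp_directSum_of_notMem h₁ h₂X heX⟩

theorem IsSeparator.foldl_lcomp {l : List α} (hX : D.IsSeparator X) (hl : ∀ e ∈ l, e ∈ D.E) :
    (l.foldl SetSystem.lcomp D).IsSeparator X := by
  induction l generalizing D with
  | nil => exact hX
  | cons e l ih =>
    exact ih (hX.lcomp (hl e List.mem_cons_self)) fun a ha => hl a (List.mem_cons_of_mem e ha)

theorem IsSeparator.lcompSet (hX : D.IsSeparator X) {A : Finset α} (hA : A ⊆ D.E) :
    (D.lcompSet A).IsSeparator X :=
  hX.foldl_lcomp fun _ he => hA (Finset.mem_toList.mp he)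

end IsSeparator

end SetSystem

theorem separator_twist_lcomp_general {α : Type*} [DecidableEq α]
    (D : SetSystem α) (A : Finset α) (hA : A ⊆ D.E)
    (X : Finset α) (hX : D.IsSeparator X) :
    (D.twist A).IsSeparator X ∧ (D.lcompSet A).IsSeparator X :=
  ⟨hX.twist hA, hX.lcompSet hA⟩

/-- Let `D = (E, 𝓕)` be a set system with `𝓕` nonempty, let `A ⊆ E` and let `X` be a
separator of `D`. Then `X` is a separator of the twist `D*A` and of the loop
complementation `D+A`. -/
theorem separator_twist_lcomp {α : Type*} [DecidableEq α]
    (D : SetSystem α) (hne : D.Fs.Nonempty) (A : Finset α) (hA : A ⊆ D.E)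
    (X : Finset α) (hX : D.IsSeparator X) :
    (D.twist A).IsSeparator X ∧ (D.lcompSet A).IsSeparator X :=
  separator_twist_lcomp_general D A hA X hX
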